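/- arXiv:1412.6730 — 3 statements merged into one kernel-verified Lean document; each statement's English description precedes it below -/
import Mathlib

section
/- For the 2×2 matrix P(x) with entries P₁₁ = 2 + x₂², P₁₂ = P₂₁ = x₁x₂ − 1, P₂₂ = 1 + x₁², the determinant satisfies det P(x) = 1 + x₁² + (x₁ + x₂)², and consequently the minimum eigenvalue of P(x) is at least 1/3 for all (x₁, x₂) ∈ ℝ². -/
/-!
The eigenvalues `λ, μ` of `P(x)` satisfy `λ μ = det P(x)` and `λ + μ = trace P(x) > 0`, so
`λ ≥ λ μ / (λ + μ) = det P(x) / trace P(x)`. With `det P(x) = 1 + x₁² + (x₁ + x₂)²` and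
`trace P(x) = 3 + x₁² + x₂²` the quotient is at least `1/3`, because
`5 (3 det P(x) - trace P(x)) = (5 x₁ + 3 x₂)² + x₂²`.
-/

open Matrix

lemma mul_div_add_le_left {a b : ℝ} (hab : 0 < a + b) : a * b / (a + b) ≤ a := by
  rw [div_le_iff₀ hab]
  nlinarith [sq_nonneg a]

lemma Matrix.IsHermitian.det_div_trace_le_eigenvalues {A : Matrix (Fin 2) (Fin 2) ℝ}
    (hA : A.IsHermitian) (htr : 0 < A.trace) (i : Fin 2) :
    A.det / A.trace ≤ hA.eigenvalues i := by
  rw [hA.det_eq_prod_eigenvalues, hA.trace_eq_sum_eigenvalues] at *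
  simp only [Fin.prod_univ_two, Fin.sum_univ_two, RCLike.ofReal_real_eq_id, id] at *
  fin_cases i
  · exact mul_div_add_le_left htr
  · rw [mul_comm, add_comm] at *
    exact mul_div_add_le_left htr

/-- For `P(x) = [[2 + x₂², x₁x₂ − 1], [x₁x₂ − 1, 1 + x₁²]]` one has
`det P(x) = 1 + x₁² + (x₁ + x₂)²` and every eigenvalue of `P(x)` is at least `1/3`. -/
theorem det_and_min_eigenvalue_bound
    (P : ℝ → ℝ → Matrix (Fin 2) (Fin 2) ℝ)
    (hP : ∀ x₁ x₂ : ℝ, P x₁ x₂ = !![2 + x₂ ^ 2, x₁ * x₂ - 1; x₁ * x₂ - 1, 1 + x₁ ^ 2]) :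
    ∀ x₁ x₂ : ℝ,
      (P x₁ x₂).det = 1 + x₁ ^ 2 + (x₁ + x₂) ^ 2 ∧
      ∀ (hH : (P x₁ x₂).IsHermitian) (i : Fin 2), (1 : ℝ) / 3 ≤ hH.eigenvalues i := by
  intro x₁ x₂
  have hdet : (P x₁ x₂).det = 1 + x₁ ^ 2 + (x₁ + x₂) ^ 2 := by
    rw [hP, det_fin_two_of]; ring
  have htr : (P x₁ x₂).trace = 3 + x₁ ^ 2 + x₂ ^ 2 := by
    rw [hP, trace_fin_two_of]; ring
  refine ⟨hdet, fun hH i => ?_⟩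
  calc (1 : ℝ) / 3 ≤ (1 + x₁ ^ 2 + (x₁ + x₂) ^ 2) / (3 + x₁ ^ 2 + x₂ ^ 2) := by
        rw [div_le_div_iff₀ (by norm_num) (by positivity)]
        nlinarith [sq_nonneg (5 * x₁ + 3 * x₂), sq_nonneg x₂]
    _ = (P x₁ x₂).det / (P x₁ x₂).trace := by rw [hdet, htr]
    _ ≤ hH.eigenvalues i := hH.det_div_trace_le_eigenvalues (by rw [htr]; positivity) i
end

section
/- For every positive definite symmetric real 2×2 matrix P = [[p, q], [q, r]] (so p > 0, r > 0, pr > q²), there exist x = (x₁, x₂) ∈ ℝ² and v = (0, v₂) with v₂ ≠ 0 such that vᵀ(P·Df(x) + Df(x)ᵀP)v > 0, where Df(x) is the Jacobian of the vector field f(x) = (x₂√(1+x₁²), −x₁x₂²/√(1+x₁²)). Hence no constant Riemannian metric is geodesically monotone in the directions tangent to the level sets of the output h(x) = x₁. -/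
/-!
For a symmetric `P`, the symmetrized form `vᵀ(P·A + Aᵀ·P)v` equals `2 vᵀ P A v`. On the tangent
vector `v = (0, v₂)` this only sees the second column of `Df(x)`, and evaluates to
`2 v₂² (q(1 + x₁²) − 2 r x₁ x₂) / √(1 + x₁²)`. Since `r ≠ 0`, the free coordinate `x₂` can be chosen
to make the bracket positive: at `x₁ = 1`, `x₂ = (q - 1)/r` it equals `2`.
-/

open Matrix

theorem Matrix.IsSymm.dotProduct_mulVec_mul_add_transpose_mul {n R : Type*} [Fintype n]
    [CommRing R] {P : Matrix n n R} (hP : P.IsSymm) (A : Matrix n n R) (v : n → R) :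
    v ⬝ᵥ (P * A + Aᵀ * P) *ᵥ v = 2 * (v ⬝ᵥ (P * A) *ᵥ v) := by
  have hT : Aᵀ * P = (P * A)ᵀ := by rw [transpose_mul, hP.eq]
  rw [hT, add_mulVec, dotProduct_add, dotProduct_transpose_mulVec, two_mul]

theorem vecCons_zero_dotProduct_mulVec_mul_smul (p q r c v : ℝ)
    (M : Matrix (Fin 2) (Fin 2) ℝ) :
    ![0, v] ⬝ᵥ (!![p, q; q, r] * c • M) *ᵥ ![0, v] = c * v ^ 2 * (q * M 0 1 + r * M 1 1) := by
  simp only [mulVec, dotProduct, mul_apply, Matrix.smul_apply, Fin.sum_univ_two, cons_val_zero,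
    cons_val_one, of_apply, smul_eq_mul]
  ring

theorem no_constant_metric_monotone_general
    (p q r : ℝ) (hr : 0 < r)
    (P : Matrix (Fin 2) (Fin 2) ℝ) (hP : P = !![p, q; q, r])
    (Df : ℝ → ℝ → Matrix (Fin 2) (Fin 2) ℝ)
    (hDf : ∀ x₁ x₂ : ℝ, Df x₁ x₂ =
      (Real.sqrt (1 + x₁ ^ 2))⁻¹ •
        !![x₁ * x₂, 1 + x₁ ^ 2; -(x₂ ^ 2) / (1 + x₁ ^ 2), -2 * x₁ * x₂]) :
    ∃ x₁ x₂ v₂ : ℝ, v₂ ≠ 0 ∧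
      0 < (![0, v₂]) ⬝ᵥ (P * Df x₁ x₂ + (Df x₁ x₂)ᵀ * P).mulVec ![0, v₂] := by
  refine ⟨1, (q - 1) / r, 1, one_ne_zero, ?_⟩
  have hPsymm : P.IsSymm := by
    rw [hP]; ext i j; fin_cases i <;> fin_cases j <;> rfl
  have hbracket : q * (1 + 1 ^ 2) + r * (-2 * 1 * ((q - 1) / r)) = 2 := by
    field_simp; ring
  rw [hPsymm.dotProduct_mulVec_mul_add_transpose_mul, hP, hDf,
    vecCons_zero_dotProduct_mulVec_mul_smul]
  simp only [of_apply, cons_val', cons_val_zero, cons_val_one, empty_val',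
    cons_val_fin_one, hbracket]
  have hsqrt : 0 < Real.sqrt (1 + 1 ^ 2) := Real.sqrt_pos.2 (by norm_num)
  positivity

/-- For every constant symmetric positive definite `2×2` metric `P = [[p,q],[q,r]]`,
there are a point `x` and a vector `v = (0, v₂)` tangent to the level sets of
`h(x) = x₁` such that `vᵀ (P·Df(x) + Df(x)ᵀ·P) v > 0`, where `Df` is the Jacobian of
`f(x) = (x₂√(1+x₁²), −x₁x₂²/√(1+x₁²))`.  Hence no constant metric is geodesically
monotone in the directions tangent to the output level sets. -/
theorem no_constant_metric_monotone
    (p q r : ℝ) (hp : 0 < p) (hr : 0 < r) (hpr : q ^ 2 < p * r)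
    (P : Matrix (Fin 2) (Fin 2) ℝ) (hP : P = !![p, q; q, r])
    (Df : ℝ → ℝ → Matrix (Fin 2) (Fin 2) ℝ)
    (hDf : ∀ x₁ x₂ : ℝ, Df x₁ x₂ =
      (Real.sqrt (1 + x₁ ^ 2))⁻¹ •
        !![x₁ * x₂, 1 + x₁ ^ 2; -(x₂ ^ 2) / (1 + x₁ ^ 2), -2 * x₁ * x₂]) :
    ∃ x₁ x₂ v₂ : ℝ, v₂ ≠ 0 ∧
      0 < (![0, v₂]) ⬝ᵥ (P * Df x₁ x₂ + (Df x₁ x₂)ᵀ * P).mulVec ![0, v₂] :=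
  no_constant_metric_monotone_general p q r hr P hP Df hDf
end

section
/- Let P : ℝⁿ → ℝ^{n×n} be a C¹ symmetric-matrix-valued function, f : ℝⁿ → ℝⁿ a C¹ vector field, h : ℝⁿ → ℝ^m C¹, and θ : ℝ^m → (0, ∞) C¹. Suppose ℒ_f P(x) ≤ ρ(x)·Dh(x)ᵀDh(x) − (ε/2)P(x) for all x, for some continuous ρ ≥ 0 and ε > 0, and suppose θ∘h and its gradient, f, and P are bounded on every compact set with P bounded below by p̲ I > 0 on the region of interest. Then for the time-scaled vector field f̄(x) = θ(h(x))·f(x) there exists a continuous ρ̄ and ε̄ > 0 (on any compact set where θ∘h ≥ θ₀ > 0) such that ℒ_{f̄} P(x) ≤ ρ̄(x)·Dh(x)ᵀDh(x) − (ε̄/2)P(x). -/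
open Matrix

/-!
Product rule: `ℒ_{φ F} P = φ ℒ_F P + 2 (Dφ v)(vᵀ P F)`. On a compact set `φ = θ ∘ h` is
bounded below by some `θ₀ > 0`, so the first term inherits the decay rate `θ₀ ε / 2`. The cross
term is controlled by `|Dφ v| ≤ ‖Dθ‖ ‖Dh v‖` and Cauchy–Schwarz, and Young's inequality splits it
into a multiple of `‖Dh v‖²` (absorbed into `ρ̄`) and a multiple of `‖v‖² ≤ vᵀPv / p̲`, which is
chosen to eat half of the decay.
-/

/-- `vᵀ (ℒ_F P)(x) v`. -/
noncomputable def lieQuadForm {n : ℕ} (P : EuclideanSpace ℝ (Fin n) → Matrix (Fin n) (Fin n) ℝ)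
    (F : EuclideanSpace ℝ (Fin n) → EuclideanSpace ℝ (Fin n)) (x v : EuclideanSpace ℝ (Fin n)) :
    ℝ :=
  fderiv ℝ (fun z => (fun i => v i) ⬝ᵥ (P z).mulVec fun i => v i) x (F x)
    + 2 * ((fun i => v i) ⬝ᵥ (P x).mulVec fun i => fderiv ℝ F x v i)

lemma two_mul_le_add_mul_sq_of_abs_le {u a b η : ℝ} (hu : |u| ≤ a * b) (hη : 0 < η) :
    2 * u ≤ η * a ^ 2 + η⁻¹ * b ^ 2 := by
  linarith [le_abs_self u, two_mul_le_add_mul_sq (a := a) (b := b) hη]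

lemma abs_dotProduct_le_norm_mul_norm {n : ℕ} (v : EuclideanSpace ℝ (Fin n)) (w : Fin n → ℝ) :
    |(fun i => v i) ⬝ᵥ w| ≤ ‖v‖ * ‖WithLp.toLp 2 w‖ := by
  have : (fun i => v i) ⬝ᵥ w = inner ℝ v (WithLp.toLp 2 w) := by
    rw [EuclideanSpace.inner_eq_star_dotProduct, dotProduct_comm]
    rfl
  rw [this]
  exact abs_real_inner_le_norm _ _

lemma abs_fderiv_comp_apply_le {E F : Type*} [NormedAddCommGroup E] [NormedSpace ℝ E]
    [NormedAddCommGroup F] [NormedSpace ℝ F] {θ : F → ℝ} {h : E → F} {x : E}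
    (hθ : DifferentiableAt ℝ θ (h x)) (hh : DifferentiableAt ℝ h x) (v : E) :
    |fderiv ℝ (fun z => θ (h z)) x v| ≤ ‖fderiv ℝ θ (h x)‖ * ‖fderiv ℝ h x v‖ := by
  rw [← Real.norm_eq_abs, show (fun z => θ (h z)) = θ ∘ h from rfl, fderiv_comp x hθ hh]
  exact (fderiv ℝ θ (h x)).le_opNorm _

section LieDerivative

variable {n : ℕ} (P : EuclideanSpace ℝ (Fin n) → Matrix (Fin n) (Fin n) ℝ)
  {F : EuclideanSpace ℝ (Fin n) → EuclideanSpace ℝ (Fin n)} {φ : EuclideanSpace ℝ (Fin n) → ℝ}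
  {x : EuclideanSpace ℝ (Fin n)}

lemma lieQuadForm_smul (hφ : DifferentiableAt ℝ φ x) (hF : DifferentiableAt ℝ F x)
    (v : EuclideanSpace ℝ (Fin n)) :
    lieQuadForm P (fun z => φ z • F z) x v = φ x * lieQuadForm P F x v
      + 2 * (fderiv ℝ φ x v * ((fun i => v i) ⬝ᵥ (P x).mulVec fun i => F x i)) := by
  have hDF : (fun i => fderiv ℝ (fun z => φ z • F z) x v i)
      = φ x • (fun i => fderiv ℝ F x v i) + fderiv ℝ φ x v • fun i => F x i := by
    rw [fderiv_fun_smul hφ hF]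
    rfl
  simp only [lieQuadForm, hDF, ContinuousLinearMap.map_smul, smul_eq_mul, mulVec_add, mulVec_smul,
    dotProduct_add, dotProduct_smul]
  ring

lemma lieQuadForm_smul_le (hφ : DifferentiableAt ℝ φ x) (hF : DifferentiableAt ℝ F x)
    {v : EuclideanSpace ℝ (Fin n)} {ρx ε pl θ₀ g N : ℝ}
    (hLie : lieQuadForm P F x v ≤
      ρx * N ^ 2 - ε / 2 * ((fun i => v i) ⬝ᵥ (P x).mulVec fun i => v i))
    (hlow : pl * ‖v‖ ^ 2 ≤ (fun i => v i) ⬝ᵥ (P x).mulVec fun i => v i)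
    (hpl : 0 < pl) (hε : 0 < ε) (hθ₀ : 0 < θ₀) (hθ₀le : θ₀ ≤ φ x)
    (hφv : |fderiv ℝ φ x v| ≤ g * N) :
    lieQuadForm P (fun z => φ z • F z) x v ≤
      (φ x * ρx + (pl * θ₀ * ε / 4)⁻¹ * (g * ‖WithLp.toLp 2 ((P x).mulVec fun i => F x i)‖) ^ 2)
          * N ^ 2
        - θ₀ * ε / 2 / 2 * ((fun i => v i) ⬝ᵥ (P x).mulVec fun i => v i) := by
  set Q := (fun i => v i) ⬝ᵥ (P x).mulVec fun i => v i
  set D := (fun i => v i) ⬝ᵥ (P x).mulVec fun i => F x i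
  set c := ‖WithLp.toLp 2 ((P x).mulVec fun i => F x i)‖
  set η := pl * θ₀ * ε / 4
  have hQ : 0 ≤ Q := (by positivity : 0 ≤ pl * ‖v‖ ^ 2).trans hlow
  have hcross : |fderiv ℝ φ x v * D| ≤ ‖v‖ * (g * c * N) := by
    rw [abs_mul]
    calc |fderiv ℝ φ x v| * |D| ≤ (g * N) * (‖v‖ * c) :=
          mul_le_mul hφv (abs_dotProduct_le_norm_mul_norm v _) (abs_nonneg _)
            ((abs_nonneg _).trans hφv)
      _ = ‖v‖ * (g * c * N) := by ring
  have hamgm := two_mul_le_add_mul_sq_of_abs_le hcross (by positivity : 0 < η)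
  have hscaled := mul_le_mul_of_nonneg_left hLie (hθ₀.trans_le hθ₀le).le
  have habsorb : η * ‖v‖ ^ 2 ≤ θ₀ * ε / 4 * Q :=
    calc η * ‖v‖ ^ 2 = θ₀ * ε / 4 * (pl * ‖v‖ ^ 2) := by ring
      _ ≤ θ₀ * ε / 4 * Q := mul_le_mul_of_nonneg_left hlow (by positivity)
  have hslow : θ₀ * (ε / 2 * Q) ≤ φ x * (ε / 2 * Q) :=
    mul_le_mul_of_nonneg_right hθ₀le (by positivity)
  rw [lieQuadForm_smul P hφ hF]
  linarith

end LieDerivative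

theorem lie_inequality_time_scaling_general
    (n m : ℕ)
    (P : EuclideanSpace ℝ (Fin n) → Matrix (Fin n) (Fin n) ℝ)
    (f : EuclideanSpace ℝ (Fin n) → EuclideanSpace ℝ (Fin n))
    (h : EuclideanSpace ℝ (Fin n) → EuclideanSpace ℝ (Fin m))
    (θ : EuclideanSpace ℝ (Fin m) → ℝ)
    (ρ : EuclideanSpace ℝ (Fin n) → ℝ) (ε pl : ℝ)
    (hPC1 : ∀ i j : Fin n, ContDiff ℝ 1 fun x => P x i j)
    (hfC1 : ContDiff ℝ 1 f) (hhC1 : ContDiff ℝ 1 h) (hθC1 : ContDiff ℝ 1 θ)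
    (hθpos : ∀ y, 0 < θ y)
    (hρcont : Continuous ρ)
    (hε : 0 < ε) (hpl : 0 < pl)
    (hPlow : ∀ x (v : EuclideanSpace ℝ (Fin n)),
      pl * ‖v‖ ^ 2 ≤ (fun i => v i) ⬝ᵥ (P x).mulVec fun i => v i)
    (hLie : ∀ x (v : EuclideanSpace ℝ (Fin n)),
      fderiv ℝ (fun z => (fun i => v i) ⬝ᵥ (P z).mulVec fun i => v i) x (f x)
          + 2 * ((fun i => v i) ⬝ᵥ (P x).mulVec fun i => fderiv ℝ f x v i) ≤
        ρ x * ‖fderiv ℝ h x v‖ ^ 2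
          - ε / 2 * ((fun i => v i) ⬝ᵥ (P x).mulVec fun i => v i)) :
    ∀ K : Set (EuclideanSpace ℝ (Fin n)), IsCompact K →
      ∃ ρb : EuclideanSpace ℝ (Fin n) → ℝ, ∃ εb : ℝ, 0 < εb ∧ ContinuousOn ρb K ∧
        ∀ x ∈ K, ∀ v : EuclideanSpace ℝ (Fin n),
          fderiv ℝ (fun z => (fun i => v i) ⬝ᵥ (P z).mulVec fun i => v i) x
              (θ (h x) • f x)
            + 2 * ((fun i => v i) ⬝ᵥ (P x).mulVec
                fun i => fderiv ℝ (fun z => θ (h z) • f z) x v i) ≤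
          ρb x * ‖fderiv ℝ h x v‖ ^ 2
            - εb / 2 * ((fun i => v i) ⬝ᵥ (P x).mulVec fun i => v i) := by
  intro K hK
  have hθd := hθC1.differentiable one_ne_zero
  have hhd := hhC1.differentiable one_ne_zero
  have hPcont : Continuous P := continuous_matrix fun i j => (hPC1 i j).continuous
  have hDθcont := hθC1.continuous_fderiv one_ne_zero
  obtain ⟨θ₀, hθ₀, hθ₀le⟩ := hK.exists_forall_le'
    (hθC1.continuous.comp hhC1.continuous).continuousOn fun x _ => hθpos (h x)
  refine ⟨fun x => θ (h x) * ρ x + (pl * θ₀ * ε / 4)⁻¹ *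
      (‖fderiv ℝ θ (h x)‖ * ‖WithLp.toLp 2 ((P x).mulVec fun i => f x i)‖) ^ 2,
    θ₀ * ε / 2, by positivity, ?_, fun x hx v => ?_⟩
  · have hfcont := hfC1.continuous
    have hθcont := hθC1.continuous
    have hhcont := hhC1.continuous
    exact Continuous.continuousOn (by fun_prop)
  exact lieQuadForm_smul_le P ((hθd _).comp x (hhd x)) (hfC1.differentiable one_ne_zero x)
    (hLie x v) (hPlow x v) hpl hε hθ₀ (hθ₀le x hx) (abs_fderiv_comp_apply_le (hθd _) (hhd x) v)

/-- Preservation of the Lie-derivative inequality under output-dependent time scaling: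
if `ℒ_f P ≤ ρ·DhᵀDh − (ε/2)P` with `P ≥ p̲ I > 0`, then for the scaled field
`f̄ = (θ∘h)·f` (with `θ > 0`) there exist, on every compact set, a continuous `ρ̄` and
`ε̄ > 0` with `ℒ_{f̄} P ≤ ρ̄·DhᵀDh − (ε̄/2)P`. -/
theorem lie_inequality_time_scaling
    (n m : ℕ)
    (P : EuclideanSpace ℝ (Fin n) → Matrix (Fin n) (Fin n) ℝ)
    (f : EuclideanSpace ℝ (Fin n) → EuclideanSpace ℝ (Fin n))
    (h : EuclideanSpace ℝ (Fin n) → EuclideanSpace ℝ (Fin m))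
    (θ : EuclideanSpace ℝ (Fin m) → ℝ)
    (ρ : EuclideanSpace ℝ (Fin n) → ℝ) (ε pl : ℝ)
    (hPsymm : ∀ x, (P x).IsSymm)
    (hPC1 : ∀ i j : Fin n, ContDiff ℝ 1 fun x => P x i j)
    (hfC1 : ContDiff ℝ 1 f) (hhC1 : ContDiff ℝ 1 h) (hθC1 : ContDiff ℝ 1 θ)
    (hθpos : ∀ y, 0 < θ y)
    (hρcont : Continuous ρ) (hρnonneg : ∀ x, 0 ≤ ρ x)
    (hε : 0 < ε) (hpl : 0 < pl)
    (hPlow : ∀ x (v : EuclideanSpace ℝ (Fin n)),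
      pl * ‖v‖ ^ 2 ≤ (fun i => v i) ⬝ᵥ (P x).mulVec fun i => v i)
    (hLie : ∀ x (v : EuclideanSpace ℝ (Fin n)),
      fderiv ℝ (fun z => (fun i => v i) ⬝ᵥ (P z).mulVec fun i => v i) x (f x)
          + 2 * ((fun i => v i) ⬝ᵥ (P x).mulVec fun i => fderiv ℝ f x v i) ≤
        ρ x * ‖fderiv ℝ h x v‖ ^ 2
          - ε / 2 * ((fun i => v i) ⬝ᵥ (P x).mulVec fun i => v i)) :
    ∀ K : Set (EuclideanSpace ℝ (Fin n)), IsCompact K →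
      ∃ ρb : EuclideanSpace ℝ (Fin n) → ℝ, ∃ εb : ℝ, 0 < εb ∧ ContinuousOn ρb K ∧
        ∀ x ∈ K, ∀ v : EuclideanSpace ℝ (Fin n),
          fderiv ℝ (fun z => (fun i => v i) ⬝ᵥ (P z).mulVec fun i => v i) x
              (θ (h x) • f x)
            + 2 * ((fun i => v i) ⬝ᵥ (P x).mulVec
                fun i => fderiv ℝ (fun z => θ (h z) • f z) x v i) ≤
          ρb x * ‖fderiv ℝ h x v‖ ^ 2
            - εb / 2 * ((fun i => v i) ⬝ᵥ (P x).mulVec fun i => v i) :=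
  lie_inequality_time_scaling_general n m P f h θ ρ ε pl hPC1 hfC1 hhC1 hθC1 hθpos hρcont hε hpl
    hPlow hLie
end
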